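/- arXiv:1807.04518 — 4 statements merged into one kernel-verified Lean document; each statement's English description precedes it below -/
import Mathlib

section
/- Let A ∈ ℝ^{n×d} have a singular value decomposition A = U Σ Vᵀ with singular values σ₁ ≥ σ₂ ≥ … ≥ σ_{min(n,d)} ≥ 0, let j ∈ {1,…,d−1} and let m be an integer with 1 ≤ m ≤ min(n,d) − 1. Set Δ = ‖A − A^(m)‖_F². Then for every matrix Y ∈ ℝ^{d×(d−j)} with orthonormal columns, 0 ≤ (‖A^(m)Y‖_F² + Δ) − ‖AY‖_F² ≤ j · σ_{m+1}². -/
open Matrix Finset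

/-- Identify a plain vector in `Fin d → ℝ` with a point of Euclidean space `ℝ^d`. -/
noncomputable def toEuc {d : ℕ} (v : Fin d → ℝ) : EuclideanSpace ℝ (Fin d) :=
  (WithLp.equiv 2 (Fin d → ℝ)).symm v

/-- Squared Euclidean distance from a point (given as a row vector) to a set. -/
noncomputable def rowDistSq {d : ℕ} (p : Fin d → ℝ) (C : Set (EuclideanSpace ℝ (Fin d))) : ℝ :=
  (Metric.infDist (toEuc p) C) ^ 2

/-- `dist²(A, C)`: sum of squared Euclidean distances of the rows of `A` to the set `C`. -/
noncomputable def matDistSq {n d : ℕ} (A : Matrix (Fin n) (Fin d) ℝ)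
    (C : Set (EuclideanSpace ℝ (Fin d))) : ℝ :=
  ∑ i, rowDistSq (A i) C

/-- Squared Frobenius norm of a matrix. -/
noncomputable def frobSq {n d : ℕ} (A : Matrix (Fin n) (Fin d) ℝ) : ℝ :=
  ∑ i, ∑ j, (A i j) ^ 2

/-- The rectangular diagonal `n × d` matrix with diagonal entries `σ 0, σ 1, …`. -/
def svdDiag (n d : ℕ) (σ : ℕ → ℝ) : Matrix (Fin n) (Fin d) ℝ :=
  Matrix.of fun i j => if (i : ℕ) = (j : ℕ) then σ (i : ℕ) else 0

/-- The truncation keeping only the first `m` diagonal entries of `svdDiag n d σ`. -/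
def svdDiagTrunc (n d m : ℕ) (σ : ℕ → ℝ) : Matrix (Fin n) (Fin d) ℝ :=
  Matrix.of fun i j => if (i : ℕ) = (j : ℕ) ∧ (i : ℕ) < m then σ (i : ℕ) else 0




lemma frobSq_eq_trace {n d : ℕ} (M : Matrix (Fin n) (Fin d) ℝ) :
    frobSq M = (Mᵀ * M).trace := by
  unfold frobSq Matrix.trace
  rw [Finset.sum_comm]
  simp [Matrix.mul_apply, Matrix.diag, sq]

lemma frobSq_orth_left {n d : ℕ} (U : Matrix (Fin n) (Fin n) ℝ)
    (hU : Uᵀ * U = 1) (M : Matrix (Fin n) (Fin d) ℝ) :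
    frobSq (U * M) = frobSq M := by
  rw [frobSq_eq_trace, frobSq_eq_trace, Matrix.transpose_mul,
    Matrix.mul_assoc, ← Matrix.mul_assoc Uᵀ U M, hU, Matrix.one_mul]

lemma frobSq_orth_right {n d : ℕ} (V : Matrix (Fin d) (Fin d) ℝ)
    (hV : Vᵀ * V = 1) (M : Matrix (Fin n) (Fin d) ℝ) :
    frobSq (M * Vᵀ) = frobSq M := by
  rw [frobSq_eq_trace, frobSq_eq_trace, Matrix.transpose_mul, Matrix.transpose_transpose]
  rw [Matrix.mul_assoc, Matrix.trace_mul_comm, Matrix.mul_assoc, Matrix.mul_assoc, hV,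
    Matrix.mul_one]

noncomputable def rowSq {d e : ℕ} (W : Matrix (Fin d) (Fin e) ℝ) (l : ℕ) : ℝ :=
  if h : l < d then ∑ k, (W ⟨l, h⟩ k) ^ 2 else 0

lemma trunc_mul_apply {n d e m' : ℕ} (τ : ℕ → ℝ) (W : Matrix (Fin d) (Fin e) ℝ)
    (i : Fin n) (k : Fin e) :
    (svdDiagTrunc n d m' τ * W) i k =
      if h : (i : ℕ) < d then (if (i : ℕ) < m' then τ i else 0) * W ⟨i, h⟩ k else 0 := by
  rw [Matrix.mul_apply]
  by_cases h : (i : ℕ) < d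
  · rw [dif_pos h, Finset.sum_eq_single (⟨(i : ℕ), h⟩ : Fin d)]
    · simp only [svdDiagTrunc, Matrix.of_apply]
      by_cases h2 : (i : ℕ) < m' <;> simp [h2]
    · intro b _ hb
      have hne : (i : ℕ) ≠ (b : ℕ) := fun hc => hb (by simp [Fin.ext_iff, ← hc])
      simp [svdDiagTrunc, hne]
    · simp
  · rw [dif_neg h]
    apply Finset.sum_eq_zero; intro l _
    have hne : (i : ℕ) ≠ (l : ℕ) := by omega
    simp [svdDiagTrunc, hne]

lemma frobSq_trunc_mul {n d e m' : ℕ} (τ : ℕ → ℝ) (W : Matrix (Fin d) (Fin e) ℝ) :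
    frobSq (svdDiagTrunc n d m' τ * W) =
      ∑ i ∈ Finset.range (min n d), if i < m' then τ i ^ 2 * rowSq W i else 0 := by
  unfold frobSq
  have key : ∀ i : Fin n, ∑ k, ((svdDiagTrunc n d m' τ * W) i k) ^ 2 =
      (fun i : ℕ => if i < d ∧ i < m' then τ i ^ 2 * rowSq W i else 0) (i : ℕ) := by
    intro i
    simp only [trunc_mul_apply]
    by_cases h : (i : ℕ) < d
    · simp only [dif_pos h]
      by_cases h2 : (i : ℕ) < m'
      · simp only [if_pos h2, if_pos (And.intro h h2), rowSq, dif_pos h, Finset.mul_sum]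
        apply Finset.sum_congr rfl; intro k _; ring
      · have : ¬ ((i : ℕ) < d ∧ (i : ℕ) < m') := by omega
        simp [h2, this]
    · have : ¬ ((i : ℕ) < d ∧ (i : ℕ) < m') := by omega
      simp [h, this]
  rw [Finset.sum_congr rfl (fun i _ => key i),
    Fin.sum_univ_eq_sum_range (fun i : ℕ => if i < d ∧ i < m' then τ i ^ 2 * rowSq W i else 0) n,
    ← Finset.sum_subset (Finset.range_subset_range.2 (min_le_left n d))]
  · apply Finset.sum_congr rfl
    intro i hi
    simp only [Finset.mem_range, lt_min_iff] at hi
    simp [hi.2]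
  · intro x hx hx2
    simp only [Finset.mem_range, lt_min_iff, not_and_or, not_lt] at hx hx2
    have : ¬ ((x : ℕ) < d ∧ x < m') := by omega
    simp [this]


lemma svdDiag_eq_trunc (n d : ℕ) (σ : ℕ → ℝ) :
    svdDiag n d σ = svdDiagTrunc n d n σ := by
  ext i l
  simp [svdDiag, svdDiagTrunc, i.isLt]

lemma diag_sub_trunc (n d m : ℕ) (σ : ℕ → ℝ) :
    svdDiag n d σ - svdDiagTrunc n d m σ =
      svdDiagTrunc n d n (fun i => if i < m then 0 else σ i) := by
  ext i l
  simp only [svdDiag, svdDiagTrunc, Matrix.sub_apply, Matrix.of_apply, i.isLt]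
  by_cases h : (i : ℕ) = (l : ℕ) <;> by_cases h2 : (i : ℕ) < m <;>
    simp [h, h2, i.isLt] <;> simp [← h, h2]

lemma rowSq_nonneg {d e : ℕ} (W : Matrix (Fin d) (Fin e) ℝ) (l : ℕ) : 0 ≤ rowSq W l := by
  unfold rowSq
  split_ifs
  · exact Finset.sum_nonneg fun k _ => sq_nonneg _
  · exact le_refl 0

lemma rowSq_le_one {d e : ℕ} (W : Matrix (Fin d) (Fin e) ℝ) (hW : Wᵀ * W = 1) (l : ℕ) :
    rowSq W l ≤ 1 := by
  unfold rowSq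
  split_ifs with h
  · set P := W * Wᵀ with hPdef
    have hPP : P * P = P := by
      rw [hPdef, Matrix.mul_assoc, ← Matrix.mul_assoc Wᵀ W Wᵀ, hW, Matrix.one_mul]
    set l' : Fin d := ⟨l, h⟩
    have hsym : ∀ a b, P a b = P b a := by
      intro a b
      simp only [hPdef, Matrix.mul_apply, Matrix.transpose_apply]
      exact Finset.sum_congr rfl fun k _ => by ring
    have hdiag : P l' l' = ∑ k, (W l' k) ^ 2 := by
      simp [hPdef, Matrix.mul_apply, sq]
    have h2 : P l' l' = ∑ t, (P l' t) ^ 2 := by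
      conv_lhs => rw [← hPP]
      rw [Matrix.mul_apply]
      exact Finset.sum_congr rfl fun t _ => by rw [hsym t l']; ring
    have h3 : (P l' l') ^ 2 ≤ ∑ t, (P l' t) ^ 2 :=
      Finset.single_le_sum (f := fun t => (P l' t) ^ 2) (fun t _ => sq_nonneg _)
        (Finset.mem_univ l')
    nlinarith [hdiag, h2, h3]
  · exact zero_le_one

lemma sum_rowSq {d e : ℕ} (W : Matrix (Fin d) (Fin e) ℝ) (hW : Wᵀ * W = 1) :
    ∑ l ∈ Finset.range d, rowSq W l = (e : ℝ) := by
  have h1 : ∑ l ∈ Finset.range d, rowSq W l = ∑ l : Fin d, ∑ k, (W l k) ^ 2 := by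
    rw [← Fin.sum_univ_eq_sum_range (fun l => rowSq W l) d]
    refine Finset.sum_congr rfl fun l _ => ?_
    rw [rowSq, dif_pos l.isLt]
  have h2 : frobSq W = (e : ℝ) := by
    rw [frobSq_eq_trace, hW, Matrix.trace_one]
    simp
  rw [h1, ← h2]; rfl

lemma rowSq_one {d : ℕ} (l : ℕ) (h : l < d) : rowSq (1 : Matrix (Fin d) (Fin d) ℝ) l = 1 := by
  rw [rowSq, dif_pos h]
  simp [Matrix.one_apply]

/-- with `A = U Σ Vᵀ` an SVD, `1 ≤ j ≤ d-1`, `1 ≤ m ≤ min(n,d)-1`,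
`Δ = ‖A - A^(m)‖_F²`, and `Y ∈ ℝ^{d×(d-j)}` with orthonormal columns:
`0 ≤ (‖A^(m)Y‖_F² + Δ) - ‖AY‖_F² ≤ j · σ_{m+1}²`. -/
theorem stmt2 {n d j : ℕ} (A : Matrix (Fin n) (Fin d) ℝ)
    (U : Matrix (Fin n) (Fin n) ℝ) (V : Matrix (Fin d) (Fin d) ℝ) (σ : ℕ → ℝ)
    (hU : Uᵀ * U = 1) (hV : Vᵀ * V = 1)
    (hσ0 : ∀ i, i < min n d → 0 ≤ σ i)
    (hσa : ∀ i i', i ≤ i' → i' < min n d → σ i' ≤ σ i)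
    (hA : A = U * svdDiag n d σ * Vᵀ)
    (hj1 : 1 ≤ j) (hj2 : j < d)
    (m : ℕ) (hm1 : 1 ≤ m) (hm2 : m + 1 ≤ min n d)
    (Y : Matrix (Fin d) (Fin (d - j)) ℝ) (hY : Yᵀ * Y = 1) :
    0 ≤ (frobSq ((U * svdDiagTrunc n d m σ * Vᵀ) * Y) +
          frobSq (A - U * svdDiagTrunc n d m σ * Vᵀ)) - frobSq (A * Y) ∧
      (frobSq ((U * svdDiagTrunc n d m σ * Vᵀ) * Y) +
          frobSq (A - U * svdDiagTrunc n d m σ * Vᵀ)) - frobSq (A * Y) ≤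
        (j : ℝ) * (σ m) ^ 2 := by
  have hVV : V * Vᵀ = 1 := mul_eq_one_comm.mp hV
  set W : Matrix (Fin d) (Fin (d - j)) ℝ := Vᵀ * Y with hWdef
  have hW : Wᵀ * W = 1 := by
    rw [hWdef, Matrix.transpose_mul, Matrix.transpose_transpose, Matrix.mul_assoc,
      ← Matrix.mul_assoc V Vᵀ Y, hVV, Matrix.one_mul, hY]
  have hr1 : ∀ i, rowSq W i ≤ 1 := rowSq_le_one W hW
  have hmin : m < min n d := by omega
  have e1 : frobSq (A * Y) = ∑ i ∈ Finset.range (min n d), σ i ^ 2 * rowSq W i := by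
    rw [hA, Matrix.mul_assoc, Matrix.mul_assoc, ← hWdef, ← Matrix.mul_assoc,
      Matrix.mul_assoc U _ W, frobSq_orth_left U hU, svdDiag_eq_trunc,
      frobSq_trunc_mul]
    refine Finset.sum_congr rfl fun i hi => ?_
    rw [if_pos (by simp only [Finset.mem_range, lt_min_iff] at hi; exact hi.1)]
  have e2 : frobSq ((U * svdDiagTrunc n d m σ * Vᵀ) * Y) =
      ∑ i ∈ Finset.range (min n d), if i < m then σ i ^ 2 * rowSq W i else 0 := by
    rw [Matrix.mul_assoc, Matrix.mul_assoc, ← hWdef, frobSq_orth_left U hU,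
      frobSq_trunc_mul]
  have e3 : frobSq (A - U * svdDiagTrunc n d m σ * Vᵀ) =
      ∑ i ∈ Finset.range (min n d), if i < m then 0 else σ i ^ 2 := by
    have hfac : A - U * svdDiagTrunc n d m σ * Vᵀ =
        U * (svdDiag n d σ - svdDiagTrunc n d m σ) * Vᵀ := by
      rw [hA, Matrix.mul_sub, Matrix.sub_mul]
    rw [hfac, frobSq_orth_right V hV, frobSq_orth_left U hU, diag_sub_trunc,
      ← Matrix.mul_one (svdDiagTrunc n d n fun i => if i < m then 0 else σ i),
      frobSq_trunc_mul]
    refine Finset.sum_congr rfl fun i hi => ?_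
    simp only [Finset.mem_range, lt_min_iff] at hi
    rw [if_pos hi.1, rowSq_one i hi.2, mul_one]
    by_cases h : i < m <;> simp [h]
  rw [e1, e2, e3, ← Finset.sum_add_distrib, ← Finset.sum_sub_distrib]
  have eE : ∀ i ∈ Finset.range (min n d),
      ((if i < m then σ i ^ 2 * rowSq W i else 0) + (if i < m then 0 else σ i ^ 2))
        - σ i ^ 2 * rowSq W i = if i < m then 0 else σ i ^ 2 * (1 - rowSq W i) := by
    intro i _
    by_cases h : i < m <;> simp [h] <;> ring
  rw [Finset.sum_congr rfl eE]
  constructor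
  · refine Finset.sum_nonneg fun i _ => ?_
    by_cases h : i < m
    · simp [h]
    · rw [if_neg h]
      exact mul_nonneg (sq_nonneg _) (by linarith [hr1 i])
  · have step1 : ∑ i ∈ Finset.range (min n d),
        (if i < m then 0 else σ i ^ 2 * (1 - rowSq W i)) ≤
        σ m ^ 2 * ∑ i ∈ Finset.range (min n d), (if i < m then 0 else (1 - rowSq W i)) := by
      rw [Finset.mul_sum]
      refine Finset.sum_le_sum fun i hi => ?_
      simp only [Finset.mem_range] at hi
      by_cases h : i < m
      · simp [h]
      · rw [if_neg h, if_neg h]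
        have hmle : m ≤ i := Nat.not_lt.mp h
        have h0 : 0 ≤ σ i := hσ0 i hi
        have hle : σ i ≤ σ m := hσa m i hmle hi
        exact mul_le_mul_of_nonneg_right (by nlinarith) (by linarith [hr1 i])
    have step2 : ∑ i ∈ Finset.range (min n d), (if i < m then 0 else (1 - rowSq W i)) ≤
        ∑ i ∈ Finset.range d, (1 - rowSq W i) := by
      calc ∑ i ∈ Finset.range (min n d), (if i < m then 0 else (1 - rowSq W i))
          ≤ ∑ i ∈ Finset.range (min n d), (1 - rowSq W i) := by
            refine Finset.sum_le_sum fun i _ => ?_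
            by_cases h : i < m <;> simp [h] <;> linarith [hr1 i]
        _ ≤ ∑ i ∈ Finset.range d, (1 - rowSq W i) :=
            Finset.sum_le_sum_of_subset_of_nonneg
              (Finset.range_subset_range.2 (min_le_right n d))
              (fun i _ _ => by linarith [hr1 i])
    have step3 : ∑ i ∈ Finset.range d, (1 - rowSq W i) = (j : ℝ) := by
      rw [Finset.sum_sub_distrib, sum_rowSq W hW, Finset.sum_const, Finset.card_range,
        Nat.cast_sub hj2.le]
      push_cast
      ring
    have hσm2 : (0 : ℝ) ≤ σ m ^ 2 := sq_nonneg _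
    calc ∑ i ∈ Finset.range (min n d), (if i < m then 0 else σ i ^ 2 * (1 - rowSq W i))
        ≤ σ m ^ 2 * ∑ i ∈ Finset.range (min n d), (if i < m then 0 else (1 - rowSq W i)) :=
          step1
      _ ≤ σ m ^ 2 * (j : ℝ) := by
          refine mul_le_mul_of_nonneg_left ?_ hσm2
          calc _ ≤ _ := step2
            _ = (j : ℝ) := step3
      _ = (j : ℝ) * σ m ^ 2 := by ring
end

section
/- Let A ∈ ℝ^{n×d}, let μ ∈ ℝ^d be the mean of the rows of A, and let A' = A − 𝟙μᵀ be obtained by subtracting μ from every row. Let ε > 0, let j ∈ {1,…,d−1}, and suppose S' ∈ ℝ^{m×d} and Δ ≥ 0 satisfy, for every j-dimensional linear subspace L of ℝ^d, dist²(A',L) ≤ dist²(S',L) + Δ ≤ (1+ε)·dist²(A',L). Define S ∈ ℝ^{2m×d} by S_{i*} = μ + √(m/n)·S'_{i*} for 1 ≤ i ≤ m and S_{(m+i)*} = μ − √(m/n)·S'_{i*} for 1 ≤ i ≤ m. Then for every affine j-dimensional subspace C of ℝ^d, dist²(A,C) ≤ (n/(2m))·Σ_{i=1}^{2m} dist²(S_{i*},C)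 + Δ ≤ (1+ε)·dist²(A,C). -/
open Matrix

/-!
Write `C = p + L` and let `P` be the orthogonal projection onto `Lᗮ`, so that
`dist(x, C) = ‖P (x - p)‖`. Since the rows of `A'` sum to zero, the cross terms vanish and
`dist²(A, C) = dist²(A', L) + n · dist²(μ, C)` (parallel axis theorem). The rows of `S` come in
pairs `μ ± c s` with `c² = m / n`, so by the parallelogram law
`(n / 2m) · dist²(S, C) = dist²(S', L) + n · dist²(μ, C)`. Adding the nonnegative term
`n · dist²(μ, C)` to the coreset inequalities for `L` gives the claim.
-/

section
variable {E : Type*} [NormedAddCommGroup E] [InnerProductSpace ℝ E]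

theorem Submodule.infDist_eq_norm_starProjection_orthogonal (K : Submodule ℝ E)
    [K.HasOrthogonalProjection] (x : E) :
    Metric.infDist x K = ‖Kᗮ.starProjection x‖ := by
  rw [Metric.infDist_eq_iInf, starProjection_orthogonal_val, starProjection_minimal]
  simp only [dist_eq_norm]
  rfl

theorem Submodule.infDist_translate_eq_norm_starProjection_orthogonal (K : Submodule ℝ E)
    [K.HasOrthogonalProjection] (p x : E) :
    Metric.infDist x ((fun y => p + y) '' K) = ‖Kᗮ.starProjection (x - p)‖ := by
  rw [← K.infDist_eq_norm_starProjection_orthogonal,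
    ← Metric.infDist_image (isometry_add_left p) (x := x - p), add_sub_cancel]

theorem sum_norm_add_sq_of_sum_eq_zero {ι : Type*} [Fintype ι] (u : ι → E) (w : E)
    (hu : ∑ i, u i = 0) :
    ∑ i, ‖u i + w‖ ^ 2 = ∑ i, ‖u i‖ ^ 2 + Fintype.card ι * ‖w‖ ^ 2 := by
  simp only [norm_add_sq_real, Finset.sum_add_distrib, ← Finset.mul_sum, ← sum_inner, hu,
    inner_zero_left, mul_zero, add_zero, Finset.sum_const, Finset.card_univ, nsmul_eq_mul]

theorem norm_add_smul_sq_add_norm_sub_smul_sq (w u : E) (c : ℝ) :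
    ‖w + c • u‖ ^ 2 + ‖w - c • u‖ ^ 2 = 2 * ‖w‖ ^ 2 + 2 * c ^ 2 * ‖u‖ ^ 2 := by
  rw [parallelogram_law_with_norm ℝ, norm_smul, mul_pow, Real.norm_eq_abs, sq_abs]
  ring

end

theorem Fin.sum_univ_two_mul {M : Type*} [AddCommMonoid M] {m : ℕ} (f : Fin (2 * m) → M) :
    ∑ i, f i = ∑ i : Fin m, f ⟨i, by omega⟩ + ∑ i : Fin m, f ⟨m + i, by omega⟩ := by
  rw [← Fin.sum_congr' f (two_mul m).symm, Fin.sum_univ_add]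
  rfl

section
variable {d : ℕ} (L : Submodule ℝ (EuclideanSpace ℝ (Fin d)))

theorem rowDistSq_translate_submodule (p : EuclideanSpace ℝ (Fin d)) (v : Fin d → ℝ) :
    rowDistSq v ((fun x => p + x) '' L) = ‖Lᗮ.starProjection (toEuc v - p)‖ ^ 2 := by
  rw [rowDistSq, L.infDist_translate_eq_norm_starProjection_orthogonal]

theorem rowDistSq_submodule (v : Fin d → ℝ) :
    rowDistSq v L = ‖Lᗮ.starProjection (toEuc v)‖ ^ 2 := by
  rw [rowDistSq, L.infDist_eq_norm_starProjection_orthogonal]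

theorem matDistSq_translate_of_centered {n : ℕ} (A A' : Matrix (Fin n) (Fin d) ℝ)
    (μ : Fin d → ℝ) (hA' : ∀ i l, A' i l = A i l - μ l) (hcentered : ∀ l, ∑ i, A' i l = 0)
    (p : EuclideanSpace ℝ (Fin d)) :
    matDistSq A ((fun x => p + x) '' L) =
      matDistSq A' L + n * rowDistSq μ ((fun x => p + x) '' L) := by
  have hrow : ∀ i, toEuc (A i) - p = toEuc (A' i) + (toEuc μ - p) := fun i => by
    ext l
    simp [toEuc, hA']
  have hsum : ∑ i, Lᗮ.starProjection (toEuc (A' i)) = 0 := by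
    rw [← map_sum]
    convert map_zero Lᗮ.starProjection
    ext l
    simp only [toEuc, WithLp.ofLp_sum, WithLp.equiv_symm_apply, PiLp.zero_apply]
    exact (Finset.sum_apply l _ _).trans (hcentered l)
  simp only [matDistSq, rowDistSq_translate_submodule, rowDistSq_submodule, hrow, map_add]
  rw [sum_norm_add_sq_of_sum_eq_zero _ _ hsum, Fintype.card_fin]

theorem matDistSq_translate_of_symmetric {m : ℕ} (S : Matrix (Fin (2 * m)) (Fin d) ℝ)
    (S' : Matrix (Fin m) (Fin d) ℝ) (μ : Fin d → ℝ) (c : ℝ)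
    (hS₁ : ∀ (i : Fin m) l, S ⟨i, by omega⟩ l = μ l + c * S' i l)
    (hS₂ : ∀ (i : Fin m) l, S ⟨m + i, by omega⟩ l = μ l - c * S' i l)
    (p : EuclideanSpace ℝ (Fin d)) :
    matDistSq S ((fun x => p + x) '' L) =
      2 * m * rowDistSq μ ((fun x => p + x) '' L) + 2 * c ^ 2 * matDistSq S' L := by
  have hrow₁ : ∀ i : Fin m, toEuc (S ⟨i, by omega⟩) - p = toEuc μ - p + c • toEuc (S' i) :=
    fun i => by ext l; simp [toEuc, hS₁]; ring
  have hrow₂ : ∀ i : Fin m, toEuc (S ⟨m + i, by omega⟩) - p = toEuc μ - p - c • toEuc (S' i) :=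
    fun i => by ext l; simp [toEuc, hS₂]; ring
  simp only [matDistSq, Fin.sum_univ_two_mul, rowDistSq_translate_submodule,
    rowDistSq_submodule, hrow₁, hrow₂]
  simp only [map_add, map_sub, map_smul, ← Finset.sum_add_distrib,
    norm_add_smul_sq_add_norm_sub_smul_sq]
  rw [Finset.sum_add_distrib, Finset.sum_const, Finset.card_univ, Fintype.card_fin,
    nsmul_eq_mul, Finset.mul_sum]
  ring
end

theorem sum_sub_mean_eq_zero {n d : ℕ} (hn : n ≠ 0) (A A' : Matrix (Fin n) (Fin d) ℝ)
    (μ : Fin d → ℝ) (hμ : ∀ l, μ l = (∑ i, A i l) / n) (hA' : ∀ i l, A' i l = A i l - μ l)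
    (l : Fin d) : ∑ i, A' i l = 0 := by
  have hn0 : (n : ℝ) ≠ 0 := by exact_mod_cast hn
  simp only [hA', Finset.sum_sub_distrib, Finset.sum_const, Finset.card_univ, Fintype.card_fin,
    nsmul_eq_mul, hμ]
  field_simp
  ring

/-- coreset for the affine `j`-subspace problem:
let `μ` be the mean of the rows of `A`, `A' = A - 𝟙μᵀ`, and suppose `(S', Δ)` is an
ε-coreset of `A'` for linear `j`-subspaces.  Define `S ∈ ℝ^{2m×d}` whose first `m` rows
are `μ + √(m/n)·S'_{i*}` and whose last `m` rows are `μ - √(m/n)·S'_{i*}`.  Then for every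
affine `j`-dimensional subspace `C` of `ℝ^d`:
`dist²(A,C) ≤ (n/(2m))·Σᵢ dist²(S_{i*},C) + Δ ≤ (1+ε)·dist²(A,C)`. -/
theorem stmt6 {n d j m : ℕ} (hn : 1 ≤ n) (hm : 1 ≤ m)
    (A : Matrix (Fin n) (Fin d) ℝ) (μ : Fin d → ℝ)
    (hμ : ∀ l, μ l = (∑ i, A i l) / n)
    (A' : Matrix (Fin n) (Fin d) ℝ) (hA' : ∀ i l, A' i l = A i l - μ l)
    (ε : ℝ) (hε : 0 < ε)
    (S' : Matrix (Fin m) (Fin d) ℝ) (Δ : ℝ)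
    (hcore : ∀ L : Submodule ℝ (EuclideanSpace ℝ (Fin d)), Module.finrank ℝ L = j →
      matDistSq A' (L : Set (EuclideanSpace ℝ (Fin d))) ≤
          matDistSq S' (L : Set (EuclideanSpace ℝ (Fin d))) + Δ ∧
        matDistSq S' (L : Set (EuclideanSpace ℝ (Fin d))) + Δ ≤
          (1 + ε) * matDistSq A' (L : Set (EuclideanSpace ℝ (Fin d))))
    (S : Matrix (Fin (2 * m)) (Fin d) ℝ)
    (hS₁ : ∀ (i : Fin m) (l : Fin d),
      S ⟨i.val, by have := i.isLt; omega⟩ l = μ l + Real.sqrt ((m : ℝ) / n) * S' i l)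
    (hS₂ : ∀ (i : Fin m) (l : Fin d),
      S ⟨m + i.val, by have := i.isLt; omega⟩ l = μ l - Real.sqrt ((m : ℝ) / n) * S' i l) :
    ∀ (p : EuclideanSpace ℝ (Fin d)) (L : Submodule ℝ (EuclideanSpace ℝ (Fin d))),
      Module.finrank ℝ L = j →
      matDistSq A ((fun x => p + x) '' (L : Set (EuclideanSpace ℝ (Fin d)))) ≤
          ((n : ℝ) / (2 * m)) *
              matDistSq S ((fun x => p + x) '' (L : Set (EuclideanSpace ℝ (Fin d)))) + Δ ∧
        ((n : ℝ) / (2 * m)) *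
              matDistSq S ((fun x => p + x) '' (L : Set (EuclideanSpace ℝ (Fin d)))) + Δ ≤
          (1 + ε) * matDistSq A ((fun x => p + x) '' (L : Set (EuclideanSpace ℝ (Fin d)))) := by
  intro p L hL
  obtain ⟨hlower, hupper⟩ := hcore L hL
  have hA := matDistSq_translate_of_centered L A A' μ hA'
    (sum_sub_mean_eq_zero (by omega) A A' μ hμ hA') p
  have hS := matDistSq_translate_of_symmetric L S S' μ _ hS₁ hS₂ p
  rw [Real.sq_sqrt (by positivity)] at hS
  have hn0 : (0 : ℝ) < n := by exact_mod_cast hn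
  have hm0 : (0 : ℝ) < m := by exact_mod_cast hm
  have hscale : (n : ℝ) / (2 * m) * matDistSq S ((fun x => p + x) '' L) =
      n * rowDistSq μ ((fun x => p + x) '' L) + matDistSq S' L := by
    rw [hS]
    field_simp
  rw [hA, hscale]
  constructor
  · linarith
  · have : 0 ≤ ε * (n * rowDistSq μ ((fun x => p + x) '' L)) :=
      mul_nonneg hε.le (mul_nonneg hn0.le (sq_nonneg _))
    linarith
end

section
/- Let A ∈ ℝ^{n×d} be a matrix of rank r, let j ≥ 0 be an integer with r + j + 1 ≤ d, and let L be an (r+j+1)-dimensional linear subspace of ℝ^d containing all row vectors A_{i*}, 1 ≤ i ≤ n. Then for every affine j-dimensional subspace V of ℝ^d there is an affine j-dimensional subspace V' ⊆ L such that dist(A_{i*}, V) = dist(A_{i*}, V') for every i ∈ {1,…,n}. -/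
/-! The rows of `A` span a subspace `R` with `dim R ≤ r`, and `V = p + W` lies in
`U = R ⊔ W ⊔ ℝ ∙ p`, so `dim U ≤ r + j + 1 = dim L`. A linear isometry of `ℝ^d` that is the
identity on `R` and sends `Rᗮ ⊓ U` isometrically into `Rᗮ ⊓ L` maps `U` into `L`; it fixes
every row of `A`, so the image of `V` has the same distances to the rows. -/

open Matrix

/-- `C` is an affine `j`-dimensional subspace of `ℝ^d`. -/
def IsAffineSub (d j : ℕ) (C : Set (EuclideanSpace ℝ (Fin d))) : Prop :=
  ∃ (p : EuclideanSpace ℝ (Fin d)) (L : Submodule ℝ (EuclideanSpace ℝ (Fin d))),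
    Module.finrank ℝ L = j ∧ C = (fun x => p + x) '' (L : Set (EuclideanSpace ℝ (Fin d)))

/-- `C` is a union of `k` affine `j`-dimensional subspaces of `ℝ^d`. -/
def IsKAffineUnion (d j k : ℕ) (C : Set (EuclideanSpace ℝ (Fin d))) : Prop :=
  ∃ f : Fin k → Set (EuclideanSpace ℝ (Fin d)),
    (∀ i, IsAffineSub d j (f i)) ∧ C = ⋃ i, f i

open Module

section LinearIsometry

variable {𝕜 E F : Type*} [RCLike 𝕜] [NormedAddCommGroup E] [InnerProductSpace 𝕜 E]
  [NormedAddCommGroup F] [InnerProductSpace 𝕜 F]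

theorem exists_linearIsometry_of_finrank_le [FiniteDimensional 𝕜 E] [FiniteDimensional 𝕜 F]
    (h : finrank 𝕜 E ≤ finrank 𝕜 F) : Nonempty (E →ₗᵢ[𝕜] F) := by
  let bE := stdOrthonormalBasis 𝕜 E
  let v := stdOrthonormalBasis 𝕜 F ∘ Fin.castLE h
  have hv : Orthonormal 𝕜 v :=
    (stdOrthonormalBasis 𝕜 F).orthonormal.comp _ (Fin.castLE_injective h)
  have hbE : Orthonormal 𝕜 bE.toBasis := by simp [bE.orthonormal]
  refine ⟨(bE.toBasis.constr 𝕜 v).isometryOfOrthonormal hbE ?_⟩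
  convert hv
  ext k
  simp

variable [FiniteDimensional 𝕜 E] {K U L : Submodule 𝕜 E}

theorem Submodule.starProjection_orthogonal_mem_inf (hKU : K ≤ U) {x : E} (hx : x ∈ U) :
    Kᗮ.starProjection x ∈ Kᗮ ⊓ U := by
  refine ⟨Kᗮ.starProjection_apply_mem x, ?_⟩
  rw [K.starProjection_orthogonal_val]
  exact U.sub_mem hx (hKU (K.starProjection_apply_mem x))

theorem exists_subtype_linearIsometry_fixing_mapsTo (hKU : K ≤ U) (hKL : K ≤ L)
    (ι : (Kᗮ ⊓ U : Submodule 𝕜 E) →ₗᵢ[𝕜] (Kᗮ ⊓ L : Submodule 𝕜 E)) :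
    ∃ ψ : U →ₗᵢ[𝕜] E, (∀ x : U, (x : E) ∈ K → ψ x = x) ∧ ∀ x, ψ x ∈ L := by
  let ρ : U →ₗ[𝕜] (Kᗮ ⊓ U : Submodule 𝕜 E) :=
    (Kᗮ.starProjection.toLinearMap ∘ₗ U.subtype).codRestrict _
      fun x => K.starProjection_orthogonal_mem_inf hKU x.2
  let M : U →ₗ[𝕜] E := K.starProjection.toLinearMap ∘ₗ U.subtype
    + (Kᗮ ⊓ L).subtype ∘ₗ ι.toLinearMap ∘ₗ ρ
  have hM : ∀ x : U, M x = K.starProjection x + ι (ρ x) := fun x => rfl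
  have norm_M : ∀ x : U, ‖M x‖ = ‖x‖ := by
    intro x
    have horth : inner 𝕜 (K.starProjection (x : E)) (ι (ρ x) : E) = 0 :=
      Submodule.inner_right_of_mem_orthogonal (K.starProjection_apply_mem _) (ι (ρ x)).2.1
    have hι : ‖(ι (ρ x) : E)‖ = ‖Kᗮ.starProjection (x : E)‖ := ι.norm_map (ρ x)
    rw [← sq_eq_sq₀ (norm_nonneg _) (norm_nonneg _), hM, sq,
      norm_add_sq_eq_norm_sq_add_norm_sq_of_inner_eq_zero _ _ horth, hι, Submodule.coe_norm,
      Submodule.norm_sq_eq_add_norm_sq_starProjection (x : E) K, sq, sq]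
  refine ⟨⟨M, norm_M⟩, fun x hx => ?_, fun x => ?_⟩
  · change M x = x
    rw [hM, K.starProjection_eq_self_iff.2 hx]
    have : ρ x = 0 := Subtype.ext (K.starProjection_orthogonal_apply_eq_zero hx)
    simp [this]
  · exact L.add_mem (hKL (K.starProjection_apply_mem _)) (ι (ρ x)).2.2

theorem exists_linearIsometry_fixing_mapsTo (hKU : K ≤ U) (hKL : K ≤ L)
    (hdim : finrank 𝕜 U ≤ finrank 𝕜 L) :
    ∃ Φ : E →ₗᵢ[𝕜] E, (∀ x ∈ K, Φ x = x) ∧ ∀ x ∈ U, Φ x ∈ L := by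
  have hU := Submodule.finrank_add_inf_finrank_orthogonal hKU
  have hL := Submodule.finrank_add_inf_finrank_orthogonal hKL
  obtain ⟨ι⟩ := exists_linearIsometry_of_finrank_le (𝕜 := 𝕜)
    (E := (Kᗮ ⊓ U : Submodule 𝕜 E)) (F := (Kᗮ ⊓ L : Submodule 𝕜 E)) (by omega)
  obtain ⟨ψ, hfix, hψL⟩ := exists_subtype_linearIsometry_fixing_mapsTo hKU hKL ι
  refine ⟨ψ.extend, fun x hx => ?_, fun x hx => ?_⟩
  · rw [ψ.extend_apply ⟨x, hKU hx⟩]; exact hfix _ hx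
  · rw [ψ.extend_apply ⟨x, hx⟩]; exact hψL _

end LinearIsometry

theorem finrank_span_toEuc_rows {n d : ℕ} (A : Matrix (Fin n) (Fin d) ℝ) :
    finrank ℝ (Submodule.span ℝ (Set.range fun i => toEuc (A i))) = A.rank := by
  rw [A.rank_eq_finrank_span_row, ← LinearEquiv.finrank_map_eq
    (WithLp.linearEquiv 2 ℝ (Fin d → ℝ)).symm, Submodule.map_span, ← Set.range_comp]
  rfl

theorem IsAffineSub.image_linearIsometry {d j : ℕ} {V : Set (EuclideanSpace ℝ (Fin d))}
    (hV : IsAffineSub d j V) (Φ : EuclideanSpace ℝ (Fin d) →ₗᵢ[ℝ] EuclideanSpace ℝ (Fin d)) :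
    IsAffineSub d j (Φ '' V) := by
  obtain ⟨p, W, hW, rfl⟩ := hV
  refine ⟨Φ p, W.map Φ.toLinearMap, ?_, ?_⟩
  · rw [← (Submodule.equivMapOfInjective _ Φ.injective W).finrank_eq, hW]
  · rw [← Set.image_comp, Submodule.map_coe, ← Set.image_comp]
    congr 1
    ext w
    simp

theorem stmt13_general {n d r j : ℕ} (A : Matrix (Fin n) (Fin d) ℝ) (hrank : A.rank = r)
    (L : Submodule ℝ (EuclideanSpace ℝ (Fin d)))
    (hL : Module.finrank ℝ L = r + j + 1)
    (hrows : ∀ i, toEuc (A i) ∈ L)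
    (V : Set (EuclideanSpace ℝ (Fin d))) (hV : IsAffineSub d j V) :
    ∃ V' : Set (EuclideanSpace ℝ (Fin d)), IsAffineSub d j V' ∧
      V' ⊆ (L : Set (EuclideanSpace ℝ (Fin d))) ∧
      ∀ i, Metric.infDist (toEuc (A i)) V = Metric.infDist (toEuc (A i)) V' := by
  set R := Submodule.span ℝ (Set.range fun i => toEuc (A i))
  obtain ⟨p, W, hWj, rfl⟩ := hV
  have hVU : (p + ·) '' (W : Set _) ⊆ ((R ⊔ (W ⊔ ℝ ∙ p) : Submodule ℝ _) : Set _) := by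
    rintro _ ⟨w, hw, rfl⟩
    simp only [SetLike.mem_coe, add_comm p w]
    exact Submodule.mem_sup_right (Submodule.add_mem_sup hw (Submodule.mem_span_singleton_self p))
  have hUL : finrank ℝ (R ⊔ (W ⊔ ℝ ∙ p) : Submodule ℝ _) ≤ finrank ℝ L := by
    have hR : finrank ℝ R = r := (finrank_span_toEuc_rows A).trans hrank
    have hp : finrank ℝ (ℝ ∙ p) ≤ 1 := by simpa using finrank_span_le_card ({p} : Set _)
    have hRW := Submodule.finrank_add_le_finrank_add_finrank R (W ⊔ ℝ ∙ p)
    have hWp := Submodule.finrank_add_le_finrank_add_finrank W (ℝ ∙ p)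
    omega
  obtain ⟨Φ, hfix, hmaps⟩ := exists_linearIsometry_fixing_mapsTo le_sup_left
    (Submodule.span_le.2 (Set.range_subset_iff.2 hrows)) hUL
  refine ⟨Φ '' _, IsAffineSub.image_linearIsometry ⟨p, W, hWj, rfl⟩ Φ, ?_, fun i => ?_⟩
  · rintro _ ⟨v, hv, rfl⟩
    exact hmaps v (hVU hv)
  · rw [← Metric.infDist_image Φ.isometry, hfix _ (Submodule.subset_span ⟨i, rfl⟩)]

/-- let `A ∈ ℝ^{n×d}` have rank `r`, let `r + j + 1 ≤ d`, and let `L` be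
an `(r+j+1)`-dimensional linear subspace containing all rows of `A`.  Then for every affine
`j`-dimensional subspace `V` of `ℝ^d` there is an affine `j`-dimensional subspace `V' ⊆ L`
with `dist(A_{i*}, V) = dist(A_{i*}, V')` for all `i`. -/
theorem stmt13 {n d r j : ℕ} (A : Matrix (Fin n) (Fin d) ℝ) (hrank : A.rank = r)
    (hdim : r + j + 1 ≤ d)
    (L : Submodule ℝ (EuclideanSpace ℝ (Fin d)))
    (hL : Module.finrank ℝ L = r + j + 1)
    (hrows : ∀ i, toEuc (A i) ∈ L)
    (V : Set (EuclideanSpace ℝ (Fin d))) (hV : IsAffineSub d j V) :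
    ∃ V' : Set (EuclideanSpace ℝ (Fin d)), IsAffineSub d j V' ∧
      V' ⊆ (L : Set (EuclideanSpace ℝ (Fin d))) ∧
      ∀ i, Metric.infDist (toEuc (A i)) V = Metric.infDist (toEuc (A i)) V' :=
  stmt13_general A hrank L hL hrows V hV
end

section
/- Let M ≥ 2, k ≥ 1 and j with j ≤ d−1 be positive integers, and let A ∈ {−M,…,M}^{n×d} be a matrix with integer entries whose rank is larger than k(j+1). Then for every set C ⊆ ℝ^d that is a union of k affine j-dimensional subspaces of ℝ^d, max_{1≤i≤n} dist(A_{i*}, C) ≥ 1/(2·(j+1)!·(2√d·M)^j). If additionally ‖A_{i*}‖₂ ≤ M for all 1 ≤ i ≤ n, then max_{1≤i≤n} dist(A_{i*}, C) ≥ 1/(2·(j+1)!·(2M)^j). -/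
open Matrix

/-!
If every row were within `B` of `C`, assign each row to a nearest affine subspace. Since the
rank exceeds `k (j + 1)`, the rows assigned to one subspace have affine rank above `j`, giving
`j + 1` linearly independent differences of rows: integer vectors of norm at most `R` (a bound
on the distances between rows), each within `2B` of a `j`-dimensional linear subspace. Their
Gram determinant is a positive integer, hence at least `1`. On the other hand, a normalized
linear dependency among their projections onto the subspace puts one of them within
`(j + 1) 2B` of the span of the others, and Gram–Schmidt bounds the determinant by
`(R ^ j (j + 1) 2B) ^ 2`. So `1 < (j + 1) 2B R ^ j`, which fails for `B = 1 / (2 (j + 1)! R ^ j)`.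
-/

open Module Submodule InnerProductSpace
open scoped RealInnerProductSpace

section GramSchmidt

variable {E : Type*} [NormedAddCommGroup E] [InnerProductSpace ℝ E]

theorem Matrix.gram_sum_smul {ι : Type*} [Fintype ι] (v : ι → E) (T : Matrix ι ι ℝ) :
    gram ℝ (fun a => ∑ x, T a x • v x) = T * gram ℝ v * Tᵀ := by
  ext a b
  simp only [gram_apply, mul_apply, transpose_apply, sum_inner, inner_sum, real_inner_smul_left,
    real_inner_smul_right, Finset.sum_mul]
  exact Finset.sum_congr rfl fun x _ => Finset.sum_congr rfl fun y _ => by ring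

variable {ι : Type*} [LinearOrder ι] [LocallyFiniteOrderBot ι] [WellFoundedLT ι]

theorem sub_gramSchmidt_mem_span (f : ι → E) (a : ι) :
    f a - gramSchmidt ℝ f a ∈ span ℝ (gramSchmidt ℝ f '' Set.Iio a) := by
  rw [sub_eq_iff_eq_add'.mpr (gramSchmidt_def'' ℝ f a)]
  exact sum_mem fun i hi => smul_mem _ _ (subset_span ⟨i, Finset.mem_Iio.mp hi, rfl⟩)

theorem norm_gramSchmidt_le_norm_sub (f : ι → E) (a : ι) {z : E}
    (hz : z ∈ span ℝ (f '' Set.Iio a)) : ‖gramSchmidt ℝ f a‖ ≤ ‖f a - z‖ := by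
  set g := gramSchmidt ℝ f
  rw [← span_gramSchmidt_Iio] at hz
  have hy : f a - g a - z ∈ span ℝ (g '' Set.Iio a) := sub_mem (sub_gramSchmidt_mem_span f a) hz
  have horth : span ℝ (g '' Set.Iio a) ≤ (ℝ ∙ g a)ᗮ := by
    rw [span_le]
    rintro _ ⟨i, hi, rfl⟩
    exact (mem_orthogonal_singleton_iff_inner_right).2 (gramSchmidt_orthogonal ℝ f hi.ne')
  have hpyth := norm_add_sq_eq_norm_sq_add_norm_sq_real
    ((mem_orthogonal_singleton_iff_inner_right).1 (horth hy))
  rw [show g a + (f a - g a - z) = f a - z by abel] at hpyth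
  exact le_of_sq_le_sq (by nlinarith [sq_nonneg ‖f a - g a - z‖]) (norm_nonneg _)

theorem det_gram_eq_prod_norm_gramSchmidt_sq [Fintype ι] (f : ι → E) :
    (gram ℝ f).det = ∏ a, ‖gramSchmidt ℝ f a‖ ^ 2 := by
  set g := gramSchmidt ℝ f
  let T : Matrix ι ι ℝ := of fun a x =>
    if x = a then 1 else if x < a then ⟪g x, f a⟫ / ‖g x‖ ^ 2 else 0
  have hf : f = fun a => ∑ x, T a x • g x := by
    funext a
    have hsplit : ∀ x, T a x • g x = (if x = a then g x else 0) +
        if x < a then (⟪g x, f a⟫ / ‖g x‖ ^ 2) • g x else 0 := fun x => by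
      rcases lt_trichotomy x a with h | rfl | h
      · simp [T, h, h.ne]
      · simp [T]
      · simp [T, h.ne', h.not_gt]
    rw [Finset.sum_congr rfl fun x _ => hsplit x, Finset.sum_add_distrib, Finset.sum_ite_eq',
      if_pos (Finset.mem_univ a), Finset.sum_ite, Finset.sum_const_zero, add_zero]
    simpa [Finset.filter_gt_eq_Iio] using gramSchmidt_def'' ℝ f a
  have hT : T.det = 1 := by
    rw [det_of_isLowerTriangular T fun a x hxa => ?_]
    · simp [T]
    · have hax : a < x := hxa
      simp [T, hax.ne', hax.not_gt]
  have hdiag : gram ℝ g = diagonal fun a => ‖g a‖ ^ 2 := by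
    ext a b
    rcases eq_or_ne a b with rfl | hab
    · simp
    · simp [hab, g, gramSchmidt_orthogonal ℝ f hab]
  calc (gram ℝ f).det = (T * gram ℝ g * Tᵀ).det := by rw [← gram_sum_smul, ← hf]
    _ = ∏ a, ‖g a‖ ^ 2 := by rw [det_mul, det_mul, det_transpose, hT, hdiag, det_diagonal]; ring

end GramSchmidt

theorem exists_normalized_dependency_of_not_linearIndependent {K V ι : Type*} [Field K]
    [LinearOrder K] [IsStrictOrderedRing K] [AddCommGroup V] [Module K V] [Fintype ι] {v : ι → V}
    (h : ¬LinearIndependent K v) :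
    ∃ (c : ι → K) (b : ι), c b = 1 ∧ (∀ a, |c a| ≤ 1) ∧ ∑ a, c a • v a = 0 := by
  obtain ⟨g, hg, a₀, ha₀⟩ := Fintype.not_linearIndependent_iff.mp h
  obtain ⟨b, -, hb⟩ :=
    Finset.exists_max_image Finset.univ (fun a => |g a|) ⟨a₀, Finset.mem_univ _⟩
  have hgb : g b ≠ 0 := by
    intro h0
    have := hb a₀ (Finset.mem_univ _)
    rw [h0, abs_zero] at this
    exact ha₀ (abs_nonpos_iff.mp this)
  refine ⟨fun a => g a / g b, b, div_self hgb, fun a => ?_, ?_⟩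
  · rw [abs_div, div_le_one (abs_pos.mpr hgb)]
    exact hb a (Finset.mem_univ _)
  · simp_rw [div_eq_inv_mul, mul_smul, ← Finset.smul_sum, hg, smul_zero]

section Flatness

variable {E : Type*} [NormedAddCommGroup E] [InnerProductSpace ℝ E]

theorem exists_norm_sub_lt_of_forall_near_submodule {ι : Type*} [Fintype ι] {L : Submodule ℝ E}
    [FiniteDimensional ℝ L] (hL : finrank ℝ L < Fintype.card ι) {w : ι → E} {ε : ℝ}
    (hw : ∀ a, ∃ u ∈ L, ‖w a - u‖ < ε) :
    ∃ b, ∃ z ∈ span ℝ (w '' {b}ᶜ), ‖w b - z‖ < Fintype.card ι * ε := by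
  classical
  choose u huL hu using hw
  have hdep : ¬LinearIndependent ℝ fun a => (⟨u a, huL a⟩ : L) := fun h =>
    hL.not_ge h.fintype_card_le_finrank
  obtain ⟨c, b, hcb, hc, hcu⟩ := exists_normalized_dependency_of_not_linearIndependent hdep
  have hcu : ∑ a, c a • u a = 0 := by simpa using congrArg Subtype.val hcu
  have hsplit : w b - ∑ a, c a • w a = -∑ a ∈ Finset.univ.erase b, c a • w a := by
    rw [← Finset.add_sum_erase _ _ (Finset.mem_univ b), hcb, one_smul]
    abel
  refine ⟨b, w b - ∑ a, c a • w a, ?_, ?_⟩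
  · rw [hsplit]
    exact neg_mem (sum_mem fun a ha =>
      smul_mem _ _ (subset_span ⟨a, Finset.ne_of_mem_erase ha, rfl⟩))
  · have hne : (Finset.univ : Finset ι).Nonempty := ⟨b, Finset.mem_univ _⟩
    calc ‖w b - (w b - ∑ a, c a • w a)‖ = ‖∑ a, c a • (w a - u a)‖ := by
          simp_rw [sub_sub_cancel, smul_sub, Finset.sum_sub_distrib, hcu, sub_zero]
      _ ≤ ∑ a, |c a| * ‖w a - u a‖ := by
          simpa only [norm_smul, Real.norm_eq_abs] using
            norm_sum_le Finset.univ fun a => c a • (w a - u a)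
      _ < ∑ _a : ι, ε := Finset.sum_lt_sum_of_nonempty hne fun a _ =>
          (mul_le_of_le_one_left (norm_nonneg _) (hc a)).trans_lt (hu a)
      _ = Fintype.card ι * ε := by simp

theorem det_gram_le_of_mem_span_compl {m : ℕ} {w : Fin (m + 1) → E} {R : ℝ}
    (hw : ∀ a, ‖w a‖ ≤ R) {b : Fin (m + 1)} {z : E} (hz : z ∈ span ℝ (w '' {b}ᶜ)) :
    (gram ℝ w).det ≤ (R ^ m * ‖w b - z‖) ^ 2 := by
  set σ := Equiv.swap b (Fin.last m)
  set w' := w ∘ σ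
  have hdet : (gram ℝ w).det = (gram ℝ w').det := by
    rw [show gram ℝ w' = (gram ℝ w).submatrix σ σ from rfl, det_submatrix_equiv_self]
  have hlast : w' (Fin.last m) = w b := congrArg w (Equiv.swap_apply_right _ _)
  have hz' : z ∈ span ℝ (w' '' Set.Iio (Fin.last m)) := by
    have : Set.Iio (Fin.last m) = {Fin.last m}ᶜ := by
      ext a; simp [Fin.lt_last_iff_ne_last]
    rwa [this, Set.image_comp, Equiv.image_compl, Set.image_singleton, Equiv.swap_apply_right]
  set g := gramSchmidt ℝ w'
  have hg : ∀ a, ‖g a‖ ≤ R := fun a => by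
    have := norm_gramSchmidt_le_norm_sub w' a (zero_mem _)
    rw [sub_zero] at this
    exact this.trans (hw (σ a))
  have hfirst : ∏ a : Fin m, ‖g a.castSucc‖ ^ 2 ≤ (R ^ m) ^ 2 := by
    calc ∏ a : Fin m, ‖g a.castSucc‖ ^ 2 ≤ ∏ _a : Fin m, R ^ 2 := by gcongr with a; exact hg _
      _ = (R ^ m) ^ 2 := by rw [Finset.prod_const, Finset.card_univ, Fintype.card_fin, ← pow_mul,
        ← pow_mul, mul_comm]
  have hlastg : ‖g (Fin.last m)‖ ≤ ‖w b - z‖ := hlast ▸ norm_gramSchmidt_le_norm_sub w' _ hz'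
  rw [hdet, det_gram_eq_prod_norm_gramSchmidt_sq, Fin.prod_univ_castSucc, mul_pow]
  gcongr

theorem one_le_det_gram {ι : Type*} [Fintype ι] [DecidableEq ι] {w : ι → E}
    (hw : LinearIndependent ℝ w) (hint : ∀ a b, ∃ z : ℤ, ⟪w a, w b⟫ = z) :
    1 ≤ (gram ℝ w).det := by
  choose G hG using hint
  have hgram : gram ℝ w = (of G).map (Int.cast : ℤ → ℝ) := by ext a b; simp [hG]
  have hpos : (0 : ℝ) < (of G).det := by
    rw [Int.cast_det, ← hgram]
    exact (posDef_gram_of_linearIndependent hw).det_pos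
  rw [hgram, ← Int.cast_det]
  exact_mod_cast (Int.cast_pos.mp hpos : 0 < (of G).det)

theorem one_lt_of_linearIndependent_near_submodule {m : ℕ} {L : Submodule ℝ E}
    [FiniteDimensional ℝ L] (hL : finrank ℝ L ≤ m) {w : Fin (m + 1) → E}
    (hli : LinearIndependent ℝ w) (hint : ∀ a b, ∃ z : ℤ, ⟪w a, w b⟫ = z) {R ε : ℝ}
    (hw : ∀ a, ‖w a‖ ≤ R) (hnear : ∀ a, ∃ u ∈ L, ‖w a - u‖ < ε) :
    1 < (m + 1) * ε * R ^ m := by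
  obtain ⟨b, z, hz, hbz⟩ := exists_norm_sub_lt_of_forall_near_submodule
    (by simpa using Nat.lt_succ_of_le hL) hnear
  have hdet := (one_le_det_gram hli hint).trans (det_gram_le_of_mem_span_compl hw hz)
  have hRm : 0 ≤ R ^ m := pow_nonneg ((norm_nonneg _).trans (hw 0)) m
  simp only [Fintype.card_fin, Nat.cast_add, Nat.cast_one] at hbz
  have hy : 1 ≤ R ^ m * ‖w b - z‖ := by
    rwa [one_le_sq_iff_one_le_abs, abs_of_nonneg (by positivity)] at hdet
  have hRpos : 0 < R ^ m := hRm.lt_of_ne fun h => by rw [← h, zero_mul] at hy; linarith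
  calc 1 ≤ R ^ m * ‖w b - z‖ := hy
    _ < R ^ m * ((m + 1) * ε) := mul_lt_mul_of_pos_left hbz hRpos
    _ = (m + 1) * ε * R ^ m := mul_comm _ _

end Flatness

section AffineRank

variable {K V : Type*} [DivisionRing K] [AddCommGroup V] [Module K V] [FiniteDimensional K V]

theorem finrank_span_le_finrank_vectorSpan_add_one (s : Set V) :
    finrank K (span K s) ≤ finrank K (vectorSpan K s) + 1 := by
  rcases s.eq_empty_or_nonempty with rfl | ⟨p, hp⟩
  · rw [span_empty, finrank_bot]
    omega
  have hle : span K s ≤ vectorSpan K s ⊔ K ∙ p := by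
    rw [span_le]
    intro x hx
    rw [← sub_add_cancel x p]
    exact add_mem (mem_sup_left (vsub_mem_vectorSpan K hx hp))
      (mem_sup_right (mem_span_singleton_self p))
  calc finrank K (span K s) ≤ finrank K ↥(vectorSpan K s ⊔ K ∙ p) := finrank_mono hle
    _ ≤ finrank K (vectorSpan K s) + finrank K (K ∙ p) := finrank_add_le_finrank_add_finrank _ _
    _ ≤ finrank K (vectorSpan K s) + 1 := by
        gcongr
        simpa using finrank_span_le_card (R := K) ({p} : Set V)

theorem finrank_finset_sup_le_sum {ι : Type*} (s : Finset ι) (N : ι → Submodule K V) :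
    finrank K ↥(s.sup N) ≤ ∑ i ∈ s, finrank K (N i) := by
  induction s using Finset.cons_induction with
  | empty => simp
  | cons a s ha ih =>
    rw [Finset.sup_cons, Finset.sum_cons]
    exact (finrank_add_le_finrank_add_finrank _ _).trans (by gcongr)

theorem exists_le_finrank_vectorSpan_image_fiber {ι κ : Type*} [Fintype κ] (v : ι → V)
    (t : ι → κ) {m : ℕ} (h : Fintype.card κ * (m + 1) < finrank K (span K (Set.range v))) :
    ∃ c, m + 1 ≤ finrank K (vectorSpan K (v '' (t ⁻¹' {c}))) := by
  by_contra! hsmall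
  have hle : span K (Set.range v) ≤ Finset.univ.sup fun c => span K (v '' (t ⁻¹' {c})) := by
    rw [span_le]
    rintro _ ⟨i, rfl⟩
    exact Finset.le_sup (f := fun c => span K (v '' (t ⁻¹' {c}))) (Finset.mem_univ (t i))
      (subset_span ⟨i, rfl, rfl⟩)
  have := (finrank_mono hle).trans (finrank_finset_sup_le_sum _ _)
  have hsum : ∑ c, finrank K (span K (v '' (t ⁻¹' {c}))) ≤ ∑ _c : κ, (m + 1) :=
    Finset.sum_le_sum fun c _ =>
      (finrank_span_le_finrank_vectorSpan_add_one _).trans (by linarith [hsmall c])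
  simp only [Finset.sum_const, Finset.card_univ, smul_eq_mul] at hsum
  omega

theorem exists_linearIndependent_fin_of_le_finrank_span {s : Set V} {m : ℕ}
    (h : m ≤ finrank K (span K s)) : ∃ w : Fin m → V, (∀ a, w a ∈ s) ∧ LinearIndependent K w := by
  obtain ⟨f, hfs, -, hf⟩ := exists_fun_fin_finrank_span_eq K s
  exact ⟨f ∘ Fin.castLE h, fun a => hfs _, hf.comp _ (Fin.castLE_injective h)⟩

end AffineRank

section Distance

variable {E : Type*} [NormedAddCommGroup E] [InnerProductSpace ℝ E] [FiniteDimensional ℝ E]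

theorem one_lt_of_near_affine_subspaces {ι κ : Type*} [Fintype κ] {m : ℕ} {v : ι → E}
    (hint : ∀ i i', ∃ z : ℤ, ⟪v i, v i'⟫ = z) {R : ℝ} (hR : ∀ i i', ‖v i - v i'‖ ≤ R)
    (hrank : Fintype.card κ * (m + 1) < finrank ℝ (span ℝ (Set.range v)))
    {p : κ → E} {L : κ → Submodule ℝ E} (hL : ∀ c, finrank ℝ (L c) ≤ m)
    {t : ι → κ} {x : ι → E} (hx : ∀ i, x i ∈ L (t i)) {B : ℝ}
    (hB : ∀ i, ‖v i - (p (t i) + x i)‖ < B) :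
    1 < (m + 1) * (2 * B) * R ^ m := by
  obtain ⟨c, hc⟩ := exists_le_finrank_vectorSpan_image_fiber (K := ℝ) v t hrank
  rw [vectorSpan_def] at hc
  obtain ⟨w, hws, hli⟩ := exists_linearIndependent_fin_of_le_finrank_span hc
  have hdiff : ∀ a, ∃ i i', t i = c ∧ t i' = c ∧ w a = v i - v i' := fun a => by
    obtain ⟨_, ⟨i, hi, rfl⟩, _, ⟨i', hi', rfl⟩, hw⟩ := hws a
    exact ⟨i, i', hi, hi', hw.symm⟩
  choose i i' hi hi' hw using hdiff
  refine one_lt_of_linearIndependent_near_submodule (hL c) hli (fun a b => ?_)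
    (fun a => hw a ▸ hR _ _) (fun a => ⟨x (i a) - x (i' a), ?_, ?_⟩)
  · obtain ⟨z₁, h₁⟩ := hint (i a) (i b)
    obtain ⟨z₂, h₂⟩ := hint (i a) (i' b)
    obtain ⟨z₃, h₃⟩ := hint (i' a) (i b)
    obtain ⟨z₄, h₄⟩ := hint (i' a) (i' b)
    exact ⟨z₁ - z₂ - z₃ + z₄, by
      rw [hw, hw, inner_sub_left, inner_sub_right, inner_sub_right, h₁, h₂, h₃, h₄]
      push_cast
      ring⟩
  · exact sub_mem (hi a ▸ hx (i a)) (hi' a ▸ hx (i' a))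
  · have h₁ := hB (i a)
    have h₂ := hB (i' a)
    rw [hi a] at h₁
    rw [hi' a] at h₂
    calc ‖w a - (x (i a) - x (i' a))‖
        = ‖(v (i a) - (p c + x (i a))) - (v (i' a) - (p c + x (i' a)))‖ := by rw [hw]; abel_nf
      _ ≤ ‖v (i a) - (p c + x (i a))‖ + ‖v (i' a) - (p c + x (i' a))‖ := norm_sub_le _ _
      _ < 2 * B := by linarith

end Distance

theorem exists_le_infDist_of_isKAffineUnion {d j k : ℕ} (hk : 1 ≤ k) {ι : Type*}
    {v : ι → EuclideanSpace ℝ (Fin d)} (hint : ∀ i i', ∃ z : ℤ, ⟪v i, v i'⟫ = z)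
    {R : ℝ} (hR : ∀ i i', ‖v i - v i'‖ ≤ R)
    (hrank : k * (j + 1) < finrank ℝ (span ℝ (Set.range v)))
    {C : Set (EuclideanSpace ℝ (Fin d))} (hC : IsKAffineUnion d j k C) :
    ∃ i, 1 / (2 * ((j + 1).factorial : ℝ) * R ^ j) ≤ Metric.infDist (v i) C := by
  obtain ⟨f, hf, rfl⟩ := hC
  choose p L hL hfL using hf
  have hne : (⋃ c, f c).Nonempty :=
    ⟨p ⟨0, hk⟩ + 0, Set.mem_iUnion.2 ⟨⟨0, hk⟩, hfL _ ▸ ⟨0, zero_mem _, rfl⟩⟩⟩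
  by_contra! hfar
  have hnear : ∀ i, ∃ c, ∃ x ∈ L c,
      ‖v i - (p c + x)‖ < 1 / (2 * ((j + 1).factorial : ℝ) * R ^ j) := fun i => by
    obtain ⟨y, hy, hyi⟩ := (Metric.infDist_lt_iff hne).1 (hfar i)
    obtain ⟨c, hc⟩ := Set.mem_iUnion.1 hy
    rw [hfL c] at hc
    obtain ⟨x, hx, rfl⟩ := hc
    exact ⟨c, x, hx, by rwa [← dist_eq_norm]⟩
  choose t x hx hxB using hnear
  have hlt := one_lt_of_near_affine_subspaces hint hR (by simpa using hrank)
    (fun c => (hL c).le) hx hxB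
  have hfac : (j + 1 : ℝ) ≤ (j + 1).factorial := by exact_mod_cast Nat.self_le_factorial _
  -- if `R ^ j = 0` the bound is the junk value `1 / 0 = 0`
  rcases eq_or_ne (R ^ j) 0 with hRj | hRj
  · norm_num [hRj] at hlt
  · have : ((j : ℝ) + 1) * (2 * (1 / (2 * ((j + 1).factorial : ℝ) * R ^ j))) * R ^ j
        = (j + 1) / (j + 1).factorial := by field_simp
    rw [this, one_lt_div (by positivity)] at hlt
    exact hlt.not_ge hfac

theorem inner_toEuc {d : ℕ} (x y : Fin d → ℝ) : ⟪toEuc x, toEuc y⟫ = ∑ l, x l * y l := by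
  simp [toEuc, PiLp.inner_apply, mul_comm]

theorem norm_toEuc_le_sqrt_mul {d : ℕ} {x : Fin d → ℝ} {r : ℝ} (hr : 0 ≤ r)
    (hx : ∀ l, |x l| ≤ r) : ‖toEuc x‖ ≤ √d * r := by
  rw [EuclideanSpace.norm_eq, ← Real.sqrt_sq hr, ← Real.sqrt_mul (Nat.cast_nonneg d)]
  refine Real.sqrt_le_sqrt ?_
  calc ∑ l, ‖toEuc x l‖ ^ 2 ≤ ∑ _l : Fin d, r ^ 2 := Finset.sum_le_sum fun l _ => by
        simpa [toEuc, sq_abs] using pow_le_pow_left₀ (abs_nonneg _) (hx l) 2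
    _ = d * r ^ 2 := by simp

theorem finrank_span_range_toEuc {n d : ℕ} (A : Matrix (Fin n) (Fin d) ℝ) :
    finrank ℝ (span ℝ (Set.range fun i => toEuc (A i))) = A.rank := by
  let e := (WithLp.linearEquiv 2 ℝ (Fin d → ℝ)).symm
  have : span ℝ (Set.range fun i => toEuc (A i)) =
      (span ℝ (Set.range A.row)).map e.toLinearMap := by
    rw [map_span, ← Set.range_comp]
    rfl
  rw [this, LinearEquiv.finrank_map_eq, rank_eq_finrank_span_row]

theorem stmt16_general {n d : ℕ} (M k j : ℕ) (hk : 1 ≤ k)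
    (A : Matrix (Fin n) (Fin d) ℤ) (hAent : ∀ i l, |A i l| ≤ (M : ℤ))
    (hrank : k * (j + 1) < (A.map (Int.cast : ℤ → ℝ)).rank)
    (C : Set (EuclideanSpace ℝ (Fin d))) (hC : IsKAffineUnion d j k C) :
    (∃ i, 1 / (2 * (Nat.factorial (j + 1) : ℝ) * (2 * Real.sqrt d * M) ^ j) ≤
        Metric.infDist (toEuc ((A.map (Int.cast : ℤ → ℝ)) i)) C) ∧
      ((∀ i, ‖toEuc ((A.map (Int.cast : ℤ → ℝ)) i)‖ ≤ (M : ℝ)) →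
        ∃ i, 1 / (2 * (Nat.factorial (j + 1) : ℝ) * (2 * (M : ℝ)) ^ j) ≤
          Metric.infDist (toEuc ((A.map (Int.cast : ℤ → ℝ)) i)) C) := by
  set v := fun i => toEuc ((A.map (Int.cast : ℤ → ℝ)) i)
  have hint : ∀ i i', ∃ z : ℤ, ⟪v i, v i'⟫ = z := fun i i' =>
    ⟨∑ l, A i l * A i' l, by simp [v, inner_toEuc]⟩
  have hfar : ∀ r : ℝ, (∀ i, ‖v i‖ ≤ r) →
      ∃ i, 1 / (2 * (Nat.factorial (j + 1) : ℝ) * (2 * r) ^ j) ≤ Metric.infDist (v i) C :=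
    fun r hr => exists_le_infDist_of_isKAffineUnion hk hint
      (fun i i' => (norm_sub_le _ _).trans (by linarith [hr i, hr i']))
      (by rwa [finrank_span_range_toEuc]) hC
  refine ⟨?_, hfar M⟩
  simpa only [mul_assoc] using hfar (√d * M) fun i =>
    norm_toEuc_le_sqrt_mul (Nat.cast_nonneg M) fun l => by
      rw [Matrix.map_apply, ← Int.cast_abs]
      exact_mod_cast hAent i l

/-- lower bound on the maximum distance: let `M ≥ 2`, `k ≥ 1`,
`1 ≤ j ≤ d-1` and let `A ∈ {-M,…,M}^{n×d}` be an integer matrix of rank larger than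
`k(j+1)`.  Then for every union `C` of `k` affine `j`-dimensional subspaces some row of `A`
has distance at least `1/(2·(j+1)!·(2√d·M)^j)` from `C`; if moreover every row of `A` has
Euclidean norm at most `M`, some row has distance at least `1/(2·(j+1)!·(2M)^j)`. -/
theorem stmt16 {n d : ℕ} (M k j : ℕ) (hM : 2 ≤ M) (hk : 1 ≤ k) (hj1 : 1 ≤ j) (hj2 : j < d)
    (A : Matrix (Fin n) (Fin d) ℤ) (hAent : ∀ i l, |A i l| ≤ (M : ℤ))
    (hrank : k * (j + 1) < (A.map (Int.cast : ℤ → ℝ)).rank)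
    (C : Set (EuclideanSpace ℝ (Fin d))) (hC : IsKAffineUnion d j k C) :
    (∃ i, 1 / (2 * (Nat.factorial (j + 1) : ℝ) * (2 * Real.sqrt d * M) ^ j) ≤
        Metric.infDist (toEuc ((A.map (Int.cast : ℤ → ℝ)) i)) C) ∧
      ((∀ i, ‖toEuc ((A.map (Int.cast : ℤ → ℝ)) i)‖ ≤ (M : ℝ)) →
        ∃ i, 1 / (2 * (Nat.factorial (j + 1) : ℝ) * (2 * (M : ℝ)) ^ j) ≤
          Metric.infDist (toEuc ((A.map (Int.cast : ℤ → ℝ)) i)) C) :=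
  stmt16_general M k j hk A hAent hrank C hC
end
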